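/- Let n be even. Then the functions O_{n/2} = ∏_{i even} x_i + ∏_{i odd} x_i and E_{n/2} = ∏_{i even} y_i + ∏_{i odd} y_i are invariant under the pentagram map: for every (x, y) with 1 − x_i y_i ≠ 0 for all i, evaluating O_{n/2} and E_{n/2} at (T*x, T*y) gives the same values as at (x, y). -/

import Mathlib

/-- The pentagram map in corner coordinates: `T*x_i`. -/
noncomputable def pentX {n : ℕ} (x y : ZMod n → ℝ) (i : ZMod n) : ℝ :=
  x i * (1 - x (i - 1) * y (i - 1)) / (1 - x (i + 1) * y (i + 1))

/-- The pentagram map in corner coordinates: `T*y_i`. -/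
noncomputable def pentY {n : ℕ} (x y : ZMod n → ℝ) (i : ZMod n) : ℝ :=
  y (i + 1) * (1 - x (i + 2) * y (i + 2)) / (1 - x i * y i)

/-- `O_{n/2}(x) = ∏_{i even} x_i + ∏_{i odd} x_i` (indices in `ZMod n`, `n` even). -/
noncomputable def halfInv {n : ℕ} [NeZero n] (x : ZMod n → ℝ) : ℝ :=
  (∏ i ∈ Finset.univ.filter (fun i : ZMod n => Even i.val), x i) +
    ∏ i ∈ Finset.univ.filter (fun i : ZMod n => ¬ Even i.val), x i

/-!
Write `f_i = 1 - x_i y_i`. Since `n` is even, `i ↦ i ± 1` exchanges the even and odd residues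
and `i ↦ i + 2` preserves them. Over a parity class `P` with complementary class `Q`,
`∏_P T*x_i = ∏_P x_i · ∏_Q f_i / ∏_Q f_i` and `∏_P T*y_i = ∏_Q y_i · ∏_P f_i / ∏_P f_i`,
so `T*` fixes the two products of `x` and swaps the two products of `y`.
-/

open Finset

namespace ZMod

theorem not_even_val_one {n : ℕ} (hn : Even n) : ¬Even (1 : ZMod n).val := by
  rw [val_one_eq_one_mod, even_iff_two_dvd, Nat.dvd_mod_iff (even_iff_two_dvd.1 hn)]
  decide

variable {n : ℕ} [NeZero n]

theorem even_val_add_iff (hn : Even n) (i j : ZMod n) :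
    Even (i + j).val ↔ (Even i.val ↔ Even j.val) := by
  rw [val_add, even_iff_two_dvd, Nat.dvd_mod_iff (even_iff_two_dvd.1 hn), ← even_iff_two_dvd,
    Nat.even_add]

theorem even_val_add_one_iff (hn : Even n) (i : ZMod n) : Even (i + 1).val ↔ ¬Even i.val := by
  simp only [even_val_add_iff hn, not_even_val_one hn, iff_false]

theorem even_val_sub_one_iff (hn : Even n) (i : ZMod n) : Even (i - 1).val ↔ ¬Even i.val := by
  rw [← not_iff_not, ← even_val_add_one_iff hn, sub_add_cancel, not_not]

theorem even_val_add_two_iff (hn : Even n) (i : ZMod n) : Even (i + 2).val ↔ Even i.val := by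
  rw [← one_add_one_eq_two, ← add_assoc, even_val_add_one_iff hn, even_val_add_one_iff hn,
    not_not]

end ZMod

theorem Finset.prod_filter_comp_add_right {G M : Type*} [AddGroup G] [Fintype G] [CommMonoid M]
    (g : G → M) {p q : G → Prop} [DecidablePred p] [DecidablePred q] (a : G)
    (h : ∀ i, p i ↔ q (i + a)) :
    ∏ i ∈ univ.filter p, g (i + a) = ∏ j ∈ univ.filter q, g j :=
  prod_equiv (Equiv.addRight a) (by simpa using h) fun _ _ => rfl

section PentagramProducts

variable {n : ℕ} [NeZero n] {x y : ZMod n → ℝ} (p q : ZMod n → Prop) [DecidablePred p]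
  [DecidablePred q]

theorem prod_filter_pentX (hxy : ∀ i, 1 - x i * y i ≠ 0) (hsucc : ∀ i, p i ↔ q (i + 1))
    (hpred : ∀ i, p i ↔ q (i - 1)) :
    ∏ i ∈ univ.filter p, pentX x y i = ∏ i ∈ univ.filter p, x i := by
  set f : ZMod n → ℝ := fun i => 1 - x i * y i
  have hf : ∏ i ∈ univ.filter q, f i ≠ 0 := prod_ne_zero_iff.2 fun i _ => hxy i
  have hpred' : ∏ i ∈ univ.filter p, f (i - 1) = ∏ i ∈ univ.filter q, f i := by
    simp only [sub_eq_add_neg] at hpred ⊢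
    exact prod_filter_comp_add_right f (-1) hpred
  simp only [pentX, prod_div_distrib, prod_mul_distrib]
  rw [hpred', prod_filter_comp_add_right f 1 hsucc, mul_div_assoc, div_self hf, mul_one]

theorem prod_filter_pentY (hxy : ∀ i, 1 - x i * y i ≠ 0) (hsucc : ∀ i, p i ↔ q (i + 1))
    (hsucc₂ : ∀ i, p i ↔ p (i + 2)) :
    ∏ i ∈ univ.filter p, pentY x y i = ∏ i ∈ univ.filter q, y i := by
  set f : ZMod n → ℝ := fun i => 1 - x i * y i
  have hf : ∏ i ∈ univ.filter p, f i ≠ 0 := prod_ne_zero_iff.2 fun i _ => hxy i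
  simp only [pentY, prod_div_distrib, prod_mul_distrib]
  rw [prod_filter_comp_add_right y 1 hsucc, prod_filter_comp_add_right f 2 hsucc₂, mul_div_assoc,
    div_self hf, mul_one]

end PentagramProducts

theorem stmt_3 (n : ℕ) [NeZero n] (hneven : Even n) (x y : ZMod n → ℝ)
    (hxy : ∀ i, 1 - x i * y i ≠ 0) :
    halfInv (pentX x y) = halfInv x ∧ halfInv (pentY x y) = halfInv y := by
  have hsucc := ZMod.even_val_add_one_iff hneven
  have hpred := ZMod.even_val_sub_one_iff hneven
  have hsucc₂ := ZMod.even_val_add_two_iff hneven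
  set E : ZMod n → Prop := fun i => Even i.val
  set O : ZMod n → Prop := fun i => ¬Even i.val
  have hE : ∀ i, E i ↔ O (i + 1) := by simp only [E, O, hsucc, not_not, implies_true]
  have hO : ∀ i, O i ↔ E (i + 1) := by simp only [E, O, hsucc, implies_true]
  constructor
  · have hE' : ∀ i, E i ↔ O (i - 1) := by simp only [E, O, hpred, not_not, implies_true]
    have hO' : ∀ i, O i ↔ E (i - 1) := by simp only [E, O, hpred, implies_true]
    rw [halfInv, halfInv, prod_filter_pentX E O hxy hE hE', prod_filter_pentX O E hxy hO hO']
  · have hE₂ : ∀ i, E i ↔ E (i + 2) := by simp only [E, hsucc₂, implies_true]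
    have hO₂ : ∀ i, O i ↔ O (i + 2) := by simp only [O, hsucc₂, implies_true]
    rw [halfInv, halfInv, prod_filter_pentY E O hxy hE hE₂, prod_filter_pentY O E hxy hO hO₂,
      add_comm]
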